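/- arXiv:2010.01017 — 2 statements merged into one kernel-verified Lean document; each statement's English description precedes it below -/
import Mathlib

section
/- Let v be a vector of real-valued vote counts over a finite set of outcomes with v_{o*} ≥ v_o for all o, and let M output argmax_o (v_o + Lap(1/γ)) where independent Laplace noise with scale 1/γ is added to each count. Then Pr[M(d) ≠ o*] ≤ Σ_{o ≠ o*} (2 + γ(v_{o*} − v_o)) / (4·exp(γ(v_{o*} − v_o))). -/
open MeasureTheory ProbabilityTheory

/-- The density of the Laplace distribution `Lap(1/γ)`: `(γ/2) exp(-γ|x|)`. -/
noncomputable def laplacePDF (γ x : ℝ) : ℝ := (γ / 2) * Real.exp (-γ * |x|)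

/-!
If the noisy argmax is some `o ≠ o*`, then `N o - N o* ≥ v o* - v o`, so by a union bound it
suffices to know, for independent `X, Y ~ Lap(1/γ)` and `t ≥ 0`, that
`Pr[t + X ≤ Y] = ∫ f(x) Pr[Y ≥ t + x] dx = (2 + γt) e^{-γt} / 4`.
The integral is computed on the pieces `x ≤ -t`, `-t < x ≤ 0` and `0 < x`, on each of which
both the density `f` and the tail `Pr[Y ≥ t + x]` are single exponentials.
-/

open Set Real

noncomputable def laplaceTail (γ s : ℝ) : ℝ :=
  if 0 ≤ s then exp (-γ * s) / 2 else 1 - exp (γ * s) / 2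

noncomputable def laplaceMeasure (γ : ℝ) : Measure ℝ :=
  volume.withDensity fun x => ENNReal.ofReal (laplacePDF γ x)

instance (γ : ℝ) : SigmaFinite (laplaceMeasure γ) := by
  unfold laplaceMeasure; infer_instance

lemma laplacePDF_of_nonneg (γ : ℝ) {x : ℝ} (hx : 0 ≤ x) :
    laplacePDF γ x = γ / 2 * exp (-γ * x) := by
  rw [laplacePDF, abs_of_nonneg hx]

lemma laplacePDF_of_nonpos (γ : ℝ) {x : ℝ} (hx : x ≤ 0) :
    laplacePDF γ x = γ / 2 * exp (γ * x) := by
  rw [laplacePDF, abs_of_nonpos hx, neg_mul_neg]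

lemma laplacePDF_nonneg {γ : ℝ} (hγ : 0 ≤ γ) (x : ℝ) : 0 ≤ laplacePDF γ x := by
  unfold laplacePDF; positivity

lemma measurable_laplacePDF (γ : ℝ) : Measurable (laplacePDF γ) := by
  unfold laplacePDF; fun_prop

lemma integrableOn_Ioi_laplacePDF {γ s : ℝ} (hγ : 0 < γ) (hs : 0 ≤ s) :
    IntegrableOn (laplacePDF γ) (Ioi s) :=
  IntegrableOn.congr_fun ((integrableOn_exp_mul_Ioi (neg_neg_of_pos hγ) s).const_mul (γ / 2))
    (fun _ hx => (laplacePDF_of_nonneg γ (hs.trans (le_of_lt hx))).symm) measurableSet_Ioi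

lemma integrableOn_Iic_laplacePDF {γ s : ℝ} (hγ : 0 < γ) (hs : s ≤ 0) :
    IntegrableOn (laplacePDF γ) (Iic s) :=
  IntegrableOn.congr_fun ((integrableOn_exp_mul_Iic hγ s).const_mul (γ / 2))
    (fun _ hx => (laplacePDF_of_nonpos γ ((mem_Iic.1 hx).trans hs)).symm) measurableSet_Iic

lemma integrable_laplacePDF {γ : ℝ} (hγ : 0 < γ) : Integrable (laplacePDF γ) := by
  rw [← integrableOn_univ, ← Iic_union_Ioi (a := 0)]
  exact (integrableOn_Iic_laplacePDF hγ le_rfl).union (integrableOn_Ioi_laplacePDF hγ le_rfl)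

lemma setIntegral_Ioi_laplacePDF {γ s : ℝ} (hγ : 0 < γ) (hs : 0 ≤ s) :
    ∫ x in Ioi s, laplacePDF γ x = exp (-γ * s) / 2 := by
  rw [setIntegral_congr_fun measurableSet_Ioi
      (fun x hx => laplacePDF_of_nonneg γ (hs.trans (le_of_lt hx))),
    integral_const_mul, integral_exp_mul_Ioi (neg_neg_of_pos hγ)]
  field_simp

lemma setIntegral_Iic_laplacePDF {γ s : ℝ} (hγ : 0 < γ) (hs : s ≤ 0) :
    ∫ x in Iic s, laplacePDF γ x = exp (γ * s) / 2 := by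
  rw [setIntegral_congr_fun measurableSet_Iic
      (fun x hx => laplacePDF_of_nonpos γ ((mem_Iic.1 hx).trans hs)),
    integral_const_mul, integral_exp_mul_Iic hγ]
  field_simp

lemma integral_laplacePDF {γ : ℝ} (hγ : 0 < γ) : ∫ x, laplacePDF γ x = 1 := by
  rw [← setIntegral_univ, ← Iic_union_Ioi (a := 0),
    setIntegral_union (Iic_disjoint_Ioi le_rfl) measurableSet_Ioi
      (integrableOn_Iic_laplacePDF hγ le_rfl) (integrableOn_Ioi_laplacePDF hγ le_rfl),
    setIntegral_Iic_laplacePDF hγ le_rfl, setIntegral_Ioi_laplacePDF hγ le_rfl]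
  norm_num

lemma laplaceTail_of_nonneg (γ : ℝ) {s : ℝ} (hs : 0 ≤ s) :
    laplaceTail γ s = exp (-γ * s) / 2 := if_pos hs

lemma laplaceTail_of_nonpos (γ : ℝ) {s : ℝ} (hs : s ≤ 0) :
    laplaceTail γ s = 1 - exp (γ * s) / 2 := by
  rcases hs.lt_or_eq with hs | rfl
  · exact if_neg hs.not_ge
  · rw [laplaceTail_of_nonneg γ le_rfl]; norm_num

lemma setIntegral_Ici_laplacePDF {γ : ℝ} (hγ : 0 < γ) (s : ℝ) :
    ∫ x in Ici s, laplacePDF γ x = laplaceTail γ s := by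
  rcases le_total 0 s with hs | hs
  · rw [integral_Ici_eq_integral_Ioi, setIntegral_Ioi_laplacePDF hγ hs,
      laplaceTail_of_nonneg γ hs]
  · have h := integral_add_compl (s := Iic s) measurableSet_Iic (integrable_laplacePDF hγ)
    rw [compl_Iic, integral_laplacePDF hγ, setIntegral_Iic_laplacePDF hγ hs,
      ← integral_Ici_eq_integral_Ioi] at h
    rw [laplaceTail_of_nonpos γ hs]
    linarith

lemma laplaceTail_nonneg {γ : ℝ} (hγ : 0 ≤ γ) (s : ℝ) : 0 ≤ laplaceTail γ s := by
  rcases le_total 0 s with hs | hs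
  · rw [laplaceTail_of_nonneg γ hs]; positivity
  · rw [laplaceTail_of_nonpos γ hs]
    linarith [exp_le_one_iff.2 (mul_nonpos_of_nonneg_of_nonpos hγ hs)]

lemma laplaceTail_le_one {γ : ℝ} (hγ : 0 ≤ γ) (s : ℝ) : laplaceTail γ s ≤ 1 := by
  rcases le_total 0 s with hs | hs
  · rw [laplaceTail_of_nonneg γ hs]
    linarith [exp_le_one_iff.2 (mul_nonpos_of_nonpos_of_nonneg (neg_nonpos.2 hγ) hs)]
  · rw [laplaceTail_of_nonpos γ hs]; linarith [exp_pos (γ * s)]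

lemma measurable_laplaceTail (γ : ℝ) : Measurable (laplaceTail γ) :=
  Measurable.ite measurableSet_Ici (by fun_prop) (by fun_prop)

lemma laplaceMeasure_Ici {γ : ℝ} (hγ : 0 < γ) (s : ℝ) :
    laplaceMeasure γ (Ici s) = ENNReal.ofReal (laplaceTail γ s) := by
  rw [laplaceMeasure, withDensity_apply _ measurableSet_Ici,
    ← ofReal_integral_eq_lintegral_ofReal (integrable_laplacePDF hγ).integrableOn
      (ae_of_all _ (laplacePDF_nonneg hγ.le)),
    setIntegral_Ici_laplacePDF hγ]

lemma integrable_laplacePDF_mul_laplaceTail {γ : ℝ} (hγ : 0 < γ) (t : ℝ) :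
    Integrable fun x => laplacePDF γ x * laplaceTail γ (t + x) :=
  (integrable_laplacePDF hγ).mul_bdd (c := 1)
    ((measurable_laplaceTail γ).comp (measurable_const_add t)).aestronglyMeasurable
    (ae_of_all _ fun x => by
      rw [norm_of_nonneg (laplaceTail_nonneg hγ.le _)]; exact laplaceTail_le_one hγ.le _)

lemma setIntegral_Iic_laplacePDF_mul_laplaceTail {γ t : ℝ} (hγ : 0 < γ) (ht : 0 ≤ t) :
    ∫ x in Iic (-t), laplacePDF γ x * laplaceTail γ (t + x) = 3 * exp (-γ * t) / 8 := by
  have hpt : ∀ x ∈ Iic (-t), laplacePDF γ x * laplaceTail γ (t + x)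
      = laplacePDF γ x - γ / 4 * exp (γ * t) * exp (2 * γ * x) := fun x hx => by
    have hx : x ≤ -t := hx
    rw [laplaceTail_of_nonpos γ (by linarith), laplacePDF_of_nonpos γ (by linarith),
      show γ * (t + x) = γ * t + γ * x by ring, show 2 * γ * x = γ * x + γ * x by ring,
      exp_add, exp_add]
    ring
  have hexp : exp (γ * t) * exp (-(γ * t)) = 1 := by rw [← exp_add]; simp
  rw [setIntegral_congr_fun measurableSet_Iic hpt,
    integral_sub (integrableOn_Iic_laplacePDF hγ (by linarith))
      ((integrableOn_exp_mul_Iic (by positivity) _).const_mul _),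
    integral_const_mul, setIntegral_Iic_laplacePDF hγ (by linarith),
    integral_exp_mul_Iic (by positivity), show γ * -t = -γ * t by ring,
    show 2 * γ * -t = -γ * t + -γ * t by ring, exp_add, neg_mul]
  field_simp
  linear_combination -8 * hexp

lemma setIntegral_Ioc_laplacePDF_mul_laplaceTail {γ t : ℝ} (ht : 0 ≤ t) :
    ∫ x in Ioc (-t) 0, laplacePDF γ x * laplaceTail γ (t + x) = γ * t * exp (-γ * t) / 4 := by
  have hpt : ∀ x ∈ Ioc (-t) 0, laplacePDF γ x * laplaceTail γ (t + x)
      = γ / 4 * exp (-γ * t) := fun x hx => by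
    have hexp : exp (γ * x) * exp (-γ * (t + x)) = exp (-γ * t) := by rw [← exp_add]; ring_nf
    rw [laplaceTail_of_nonneg γ (by linarith [hx.1]), laplacePDF_of_nonpos γ hx.2]
    linear_combination γ / 4 * hexp
  rw [setIntegral_congr_fun measurableSet_Ioc hpt, setIntegral_const,
    Real.volume_real_Ioc_of_le (by linarith), smul_eq_mul]
  ring

lemma setIntegral_Ioi_laplacePDF_mul_laplaceTail {γ t : ℝ} (hγ : 0 < γ) (ht : 0 ≤ t) :
    ∫ x in Ioi 0, laplacePDF γ x * laplaceTail γ (t + x) = exp (-γ * t) / 8 := by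
  have hpt : ∀ x ∈ Ioi (0 : ℝ), laplacePDF γ x * laplaceTail γ (t + x)
      = γ / 4 * exp (-γ * t) * exp (-(2 * γ) * x) := fun x hx => by
    have hx : 0 < x := hx
    have hexp : exp (-γ * x) * exp (-γ * (t + x)) = exp (-γ * t) * exp (-(2 * γ) * x) := by
      rw [← exp_add, ← exp_add]; ring_nf
    rw [laplaceTail_of_nonneg γ (by linarith), laplacePDF_of_nonneg γ hx.le]
    linear_combination γ / 4 * hexp
  rw [setIntegral_congr_fun measurableSet_Ioi hpt, integral_const_mul,
    integral_exp_mul_Ioi (by linarith)]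
  field_simp
  norm_num

lemma integral_laplacePDF_mul_laplaceTail {γ t : ℝ} (hγ : 0 < γ) (ht : 0 ≤ t) :
    ∫ x, laplacePDF γ x * laplaceTail γ (t + x) = (2 + γ * t) / (4 * exp (γ * t)) := by
  have hint := integrable_laplacePDF_mul_laplaceTail hγ t
  rw [← setIntegral_univ, ← Iic_union_Ioi (a := -t),
    setIntegral_union (Iic_disjoint_Ioi le_rfl) measurableSet_Ioi
      hint.integrableOn hint.integrableOn,
    ← Ioc_union_Ioi_eq_Ioi (neg_nonpos.2 ht),
    setIntegral_union (Ioc_disjoint_Ioi le_rfl) measurableSet_Ioi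
      hint.integrableOn hint.integrableOn,
    setIntegral_Iic_laplacePDF_mul_laplaceTail hγ ht,
    setIntegral_Ioc_laplacePDF_mul_laplaceTail ht,
    setIntegral_Ioi_laplacePDF_mul_laplaceTail hγ ht, neg_mul, exp_neg]
  field_simp
  ring

lemma laplaceMeasure_prod_setOf_add_le {γ t : ℝ} (hγ : 0 < γ) (ht : 0 ≤ t) :
    (laplaceMeasure γ).prod (laplaceMeasure γ) {p | t + p.1 ≤ p.2}
      = ENNReal.ofReal ((2 + γ * t) / (4 * exp (γ * t))) := by
  rw [Measure.prod_apply (measurableSet_le (by fun_prop) (by fun_prop))]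
  calc ∫⁻ x, laplaceMeasure γ (Ici (t + x)) ∂laplaceMeasure γ
      = ∫⁻ x, ENNReal.ofReal (laplacePDF γ x) * ENNReal.ofReal (laplaceTail γ (t + x)) := by
        simp_rw [laplaceMeasure_Ici hγ]
        exact lintegral_withDensity_eq_lintegral_mul _ (measurable_laplacePDF γ).ennreal_ofReal
          ((measurable_laplaceTail γ).comp (measurable_const_add t)).ennreal_ofReal
    _ = ENNReal.ofReal (∫ x, laplacePDF γ x * laplaceTail γ (t + x)) := by
        simp_rw [← ENNReal.ofReal_mul (laplacePDF_nonneg hγ.le _)]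
        exact (ofReal_integral_eq_lintegral_ofReal (integrable_laplacePDF_mul_laplaceTail hγ t)
          (ae_of_all _ fun x => mul_nonneg (laplacePDF_nonneg hγ.le x)
            (laplaceTail_nonneg hγ.le _))).symm
    _ = ENNReal.ofReal ((2 + γ * t) / (4 * exp (γ * t))) := by
        rw [integral_laplacePDF_mul_laplaceTail hγ ht]

lemma measure_add_le_of_indepFun_laplace {A : Type*} [MeasurableSpace A] (μ : Measure A)
    {γ t : ℝ} (hγ : 0 < γ) (ht : 0 ≤ t) {X Y : A → ℝ}
    (hX : Measurable X) (hY : Measurable Y) (hlawX : μ.map X = laplaceMeasure γ)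
    (hlawY : μ.map Y = laplaceMeasure γ) (hXY : IndepFun X Y μ) :
    μ {a | t + X a ≤ Y a} = ENNReal.ofReal ((2 + γ * t) / (4 * exp (γ * t))) := by
  have hmap : μ.map (fun a => (X a, Y a)) = (laplaceMeasure γ).prod (laplaceMeasure γ) := by
    have h := (indepFun_iff_map_prod_eq_prod_map_map' hX.aemeasurable hY.aemeasurable
      (hlawX ▸ inferInstance) (hlawY ▸ inferInstance)).1 hXY
    rwa [hlawX, hlawY] at h
  rw [← laplaceMeasure_prod_setOf_add_le hγ ht, ← hmap,
    Measure.map_apply (hX.prodMk hY) (measurableSet_le (by fun_prop) (by fun_prop))]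
  rfl

theorem stmt_2_general {O : Type*} [Fintype O] [DecidableEq O]
    {A : Type*} [MeasurableSpace A] (μ : Measure A)
    (γ : ℝ) (hγ : 0 < γ)
    (v : O → ℝ) (oStar : O) (hmax : ∀ o, v o ≤ v oStar)
    (N : O → A → ℝ) (hN : ∀ o, Measurable (N o))
    (hlaw : ∀ o, μ.map (N o)
      = volume.withDensity (fun x => ENNReal.ofReal (laplacePDF γ x)))
    (hindep : iIndepFun N μ)
    (M : A → O)
    (hargmax : ∀ a o, v o + N o a ≤ v (M a) + N (M a) a) :
    μ {a | M a ≠ oStar}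
      ≤ ENNReal.ofReal (∑ o ∈ Finset.univ.erase oStar,
          (2 + γ * (v oStar - v o)) / (4 * Real.exp (γ * (v oStar - v o)))) := by
  have hsub : {a | M a ≠ oStar}
      ⊆ ⋃ o ∈ Finset.univ.erase oStar, {a | (v oStar - v o) + N oStar a ≤ N o a} :=
    fun a ha => mem_biUnion (Finset.mem_erase.2 ⟨ha, Finset.mem_univ _⟩)
      (by linarith [hargmax a oStar] : v oStar - v (M a) + N oStar a ≤ N (M a) a)
  calc μ {a | M a ≠ oStar}
      ≤ ∑ o ∈ Finset.univ.erase oStar, μ {a | (v oStar - v o) + N oStar a ≤ N o a} :=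
        (measure_mono hsub).trans (measure_biUnion_finset_le _ _)
    _ = ∑ o ∈ Finset.univ.erase oStar, ENNReal.ofReal
          ((2 + γ * (v oStar - v o)) / (4 * exp (γ * (v oStar - v o)))) :=
        Finset.sum_congr rfl fun o ho =>
          measure_add_le_of_indepFun_laplace μ hγ (sub_nonneg.2 (hmax o)) (hN oStar) (hN o)
            (hlaw oStar) (hlaw o) (hindep.indepFun (Finset.ne_of_mem_erase ho).symm)
    _ = _ := (ENNReal.ofReal_sum_of_nonneg fun o _ =>
        div_nonneg (by linarith [mul_nonneg hγ.le (sub_nonneg.2 (hmax o))]) (by positivity)).symm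

/-- Let `v` be a label score (vote count) vector with `v o* ≥ v o` for all `o`,
and let `M` output the argmax of the scores after adding i.i.d. `Lap(1/γ)` noise
to each coordinate. Then
`Pr[M(d) ≠ o*] ≤ ∑_{o ≠ o*} (2 + γ(v_{o*} - v_o)) / (4 exp(γ(v_{o*} - v_o)))`. -/
theorem stmt_2 {O : Type*} [Fintype O] [DecidableEq O] [MeasurableSpace O]
    [MeasurableSingletonClass O]
    {A : Type*} [MeasurableSpace A] (μ : Measure A) [IsProbabilityMeasure μ]
    (γ : ℝ) (hγ : 0 < γ)
    (v : O → ℝ) (oStar : O) (hmax : ∀ o, v o ≤ v oStar)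
    (N : O → A → ℝ) (hN : ∀ o, Measurable (N o))
    (hlaw : ∀ o, μ.map (N o)
      = volume.withDensity (fun x => ENNReal.ofReal (laplacePDF γ x)))
    (hindep : iIndepFun N μ)
    (M : A → O) (hM : Measurable M)
    (hargmax : ∀ a o, v o + N o a ≤ v (M a) + N (M a) a) :
    μ {a | M a ≠ oStar}
      ≤ ENNReal.ofReal (∑ o ∈ Finset.univ.erase oStar,
          (2 + γ * (v oStar - v o)) / (4 * Real.exp (γ * (v oStar - v o)))) :=
  stmt_2_general μ γ hγ v oStar hmax N hN hlaw hindep M hargmax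
end

section
/- For any ε ≥ 0, l ≥ 0, and q ∈ [0,1) with q < (e^{ε}−1)/(e^{2ε}−1), setting the data-dependent bound B(q) = log((1−q)((1−q)/(1−e^{ε}q))^l + q·e^{εl}): B is monotonically nondecreasing in q on this range. -/
open Real

/-!
With `a = e^ε` and `r(q) = (1 - q)/(1 - a q)`, the argument of the logarithm is
`f(q) = (1 - q) r(q)^l + q a^l`. On the given range `r` is increasing and `r ≤ a`, so for `q₁ ≤ q₂`
`f(q₂) - f(q₁) ≥ (1 - q₂) r(q₁)^l - (1 - q₁) r(q₁)^l + (q₂ - q₁) a^l = (q₂ - q₁)(a^l - r(q₁)^l) ≥ 0`.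
-/

namespace DataDependentBound

noncomputable def ratio (a q : ℝ) : ℝ := (1 - q) / (1 - a * q)

noncomputable def moment (a l q : ℝ) : ℝ := (1 - q) * ratio a q ^ l + q * a ^ l

variable {a l q q₁ q₂ : ℝ}

lemma one_sub_mul_pos (hq0 : 0 ≤ q) (hq : q * (a + 1) < 1) : 0 < 1 - a * q := by
  nlinarith

lemma one_sub_pos (ha : 1 ≤ a) (hq0 : 0 ≤ q) (hq : q * (a + 1) < 1) : 0 < 1 - q := by
  nlinarith

lemma ratio_pos (ha : 1 ≤ a) (hq0 : 0 ≤ q) (hq : q * (a + 1) < 1) : 0 < ratio a q :=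
  div_pos (one_sub_pos ha hq0 hq) (one_sub_mul_pos hq0 hq)

lemma ratio_le (ha : 1 ≤ a) (hq0 : 0 ≤ q) (hq : q * (a + 1) < 1) : ratio a q ≤ a := by
  rw [ratio, div_le_iff₀ (one_sub_mul_pos hq0 hq)]
  nlinarith

lemma ratio_mono (ha : 1 ≤ a) (hq₁ : 0 ≤ q₁) (h12 : q₁ ≤ q₂) (hq₂ : q₂ * (a + 1) < 1) :
    ratio a q₁ ≤ ratio a q₂ := by
  have hq₁' : q₁ * (a + 1) < 1 := by nlinarith
  rw [ratio, ratio, div_le_div_iff₀ (one_sub_mul_pos hq₁ hq₁')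
    (one_sub_mul_pos (hq₁.trans h12) hq₂)]
  nlinarith

lemma moment_pos (ha : 1 ≤ a) (hq0 : 0 ≤ q) (hq : q * (a + 1) < 1) : 0 < moment a l q := by
  have := one_sub_pos ha hq0 hq
  have := rpow_pos_of_pos (ratio_pos ha hq0 hq) l
  have := rpow_nonneg (zero_le_one.trans ha) l
  unfold moment
  positivity

lemma moment_mono (ha : 1 ≤ a) (hl : 0 ≤ l) (hq₁ : 0 ≤ q₁) (h12 : q₁ ≤ q₂)
    (hq₂ : q₂ * (a + 1) < 1) : moment a l q₁ ≤ moment a l q₂ := by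
  have hq₁' : q₁ * (a + 1) < 1 := by nlinarith
  have hr₁ := ratio_pos ha hq₁ hq₁'
  have hr_mono : ratio a q₁ ^ l ≤ ratio a q₂ ^ l :=
    rpow_le_rpow hr₁.le (ratio_mono ha hq₁ h12 hq₂) hl
  have hr_le : ratio a q₁ ^ l ≤ a ^ l := rpow_le_rpow hr₁.le (ratio_le ha hq₁ hq₁') hl
  have hq₂1 := one_sub_pos ha (hq₁.trans h12) hq₂
  unfold moment
  nlinarith [mul_le_mul_of_nonneg_left hr_mono hq₂1.le]

end DataDependentBound

open DataDependentBound

lemma mul_exp_add_one_lt_one {ε q : ℝ} (hε : 0 ≤ ε)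
    (hq : q < (exp ε - 1) / (exp (2 * ε) - 1)) : q * (exp ε + 1) < 1 := by
  rcases hε.eq_or_lt with rfl | hε
  · -- the bound is `0 / 0 = 0` here
    norm_num [exp_zero] at hq
    norm_num [exp_zero]
    linarith
  have ha : 0 < exp ε - 1 := by linarith [add_one_lt_exp hε.ne']
  rwa [show exp (2 * ε) - 1 = (exp ε - 1) * (exp ε + 1) by rw [two_mul, exp_add]; ring,
    div_mul_cancel_left₀ ha.ne', ← one_div, lt_div_iff₀ (by positivity)] at hq

/-- The data-dependent bound
`B(q) = log((1-q)((1-q)/(1-e^ε q))^l + q e^{ε l})` is monotonically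
nondecreasing in `q` on the range `0 ≤ q < (e^ε - 1)/(e^{2ε} - 1)`. -/
theorem stmt_10 (ε l : ℝ) (hε : 0 ≤ ε) (hl : 0 ≤ l) :
    ∀ q₁ q₂ : ℝ, 0 ≤ q₁ → q₁ ≤ q₂ → q₂ < 1 →
      q₂ < (Real.exp ε - 1) / (Real.exp (2 * ε) - 1) →
      Real.log ((1 - q₁) * ((1 - q₁) / (1 - Real.exp ε * q₁)) ^ l
          + q₁ * Real.exp (ε * l))
        ≤ Real.log ((1 - q₂) * ((1 - q₂) / (1 - Real.exp ε * q₂)) ^ l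
            + q₂ * Real.exp (ε * l)) := by
  intro q₁ q₂ hq₁ h12 _ hq₂
  have ha : 1 ≤ exp ε := one_le_exp hε
  have hq₂' := mul_exp_add_one_lt_one hε hq₂
  have hq₁' : q₁ * (exp ε + 1) < 1 := by nlinarith
  rw [exp_mul]
  exact log_le_log (moment_pos ha hq₁ hq₁') (moment_mono ha hl hq₁ h12 hq₂')
end
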